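/- arXiv:1211.3899 — 2 statements merged into one kernel-verified Lean document; each statement's English description precedes it below -/
import Mathlib

section
/- Let A be an n×n real matrix with ‖AᵀA − I‖ = γ ∈ (0,1) in the operator norm. Then there exists an orthogonal n×n matrix B such that ‖AB − I‖ ≤ γ. -/
/-!
Let `S = √(AᵀA)`, built from the spectral decomposition of `AᵀA`. Since `|√λ - 1| ≤ |λ - 1|` for
`λ ≥ 0`, we get `‖S - 1‖ ≤ ‖AᵀA - 1‖ = γ < 1`; in particular `S` is invertible and `U = A S⁻¹` is
orthogonal, i.e. `A = U S` is a polar decomposition. For `B = Uᵀ`, `AB - 1 = U (S - 1) Uᵀ` has the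
same norm as `S - 1`.
-/

open Matrix
noncomputable section

/-- Operator (ℓ²→ℓ²) norm of a square real matrix. -/
def opNorm {n : ℕ} (M : Matrix (Fin n) (Fin n) ℝ) : ℝ :=
  ‖(Matrix.toEuclideanCLM (𝕜 := ℝ) (n := Fin n) M :
      EuclideanSpace ℝ (Fin n) →L[ℝ] EuclideanSpace ℝ (Fin n))‖

theorem Real.abs_sqrt_sub_one_le {x : ℝ} (hx : 0 ≤ x) : |√x - 1| ≤ |x - 1| := by
  have hsq : √x * √x = x := Real.mul_self_sqrt hx
  have hfactor : |x - 1| = |√x - 1| * (√x + 1) := by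
    rw [← abs_of_nonneg (by positivity : 0 ≤ √x + 1), ← abs_mul]
    congr 1
    linear_combination -hsq
  rw [hfactor]
  nlinarith [abs_nonneg (√x - 1), Real.sqrt_nonneg x]

theorem isUnit_of_norm_sub_one_lt_one {R : Type*} [NormedRing R] [HasSummableGeomSeries R] {x : R}
    (hx : ‖x - 1‖ < 1) : IsUnit x :=
  by_contra fun h => nonunits.subset_compl_ball h (mem_ball_iff_norm.2 hx)

open scoped Matrix.Norms.L2Operator ComplexOrder

theorem opNorm_eq_l2_opNorm {n : ℕ} (M : Matrix (Fin n) (Fin n) ℝ) : opNorm M = ‖M‖ := rfl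

namespace Matrix

variable {𝕜 : Type*} [RCLike 𝕜] {n : Type*} [Fintype n] [DecidableEq n]

theorem l2_opNorm_unitary_conj_sub_one {U : Matrix n n 𝕜} (hU : U ∈ unitaryGroup n 𝕜)
    (M : Matrix n n 𝕜) : ‖U * M * star U - 1‖ = ‖M - 1‖ := by
  have hconj : U * M * star U - 1 = U * (M - 1) * star U := by
    rw [mul_sub, sub_mul, mul_one, Unitary.mul_star_self_of_mem hU]
  rw [hconj, CStarRing.norm_mul_mem_unitary _ (Unitary.star_mem hU),
    CStarRing.norm_mem_unitary_mul _ hU]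

theorem l2_opNorm_diagonal_sub_one (d : n → 𝕜) : ‖diagonal d - 1‖ = ‖d - 1‖ := by
  rw [← diagonal_one, diagonal_sub, l2_opNorm_diagonal]
  rfl

theorem PosSemidef.exists_isHermitian_mul_self_eq_norm_sub_one_le {H : Matrix n n 𝕜}
    (hH : H.PosSemidef) :
    ∃ S : Matrix n n 𝕜, S.IsHermitian ∧ S * S = H ∧ ‖S - 1‖ ≤ ‖H - 1‖ := by
  set V : Matrix n n 𝕜 := (hH.1.eigenvectorUnitary : Matrix n n 𝕜)
  have hV : V ∈ unitaryGroup n 𝕜 := hH.1.eigenvectorUnitary.2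
  set ev := hH.1.eigenvalues
  have hspec : H = V * diagonal (RCLike.ofReal ∘ ev) * star V := hH.1.spectral_theorem
  set D : Matrix n n 𝕜 := diagonal fun i => (√(ev i) : 𝕜)
  refine ⟨V * D * star V, isHermitian_mul_mul_conjTranspose _ ?_, ?_, ?_⟩
  · exact isHermitian_diagonal_of_self_adjoint _ (by ext i; simp)
  · have hsqrt : (fun i => (√(ev i) : 𝕜) * √(ev i)) = RCLike.ofReal ∘ ev := by
      funext i
      rw [Function.comp_apply, ← RCLike.ofReal_mul, Real.mul_self_sqrt (hH.eigenvalues_nonneg i)]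
    calc V * D * star V * (V * D * star V) = V * (D * (star V * V) * D) * star V := by
          simp only [Matrix.mul_assoc]
      _ = H := by
          rw [Unitary.star_mul_self_of_mem hV, Matrix.mul_one, diagonal_mul_diagonal, hsqrt,
            ← hspec]
  · rw [l2_opNorm_unitary_conj_sub_one hV, hspec, l2_opNorm_unitary_conj_sub_one hV,
      l2_opNorm_diagonal_sub_one, l2_opNorm_diagonal_sub_one]
    refine (pi_norm_le_iff_of_nonneg (norm_nonneg _)).2 fun i => le_trans ?_ (norm_le_pi_norm _ i)
    simp only [Pi.sub_apply, Function.comp_apply, Pi.one_apply]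
    rw [← RCLike.ofReal_one, ← RCLike.ofReal_sub, ← RCLike.ofReal_sub, RCLike.norm_ofReal,
      RCLike.norm_ofReal]
    exact Real.abs_sqrt_sub_one_le (hH.eigenvalues_nonneg i)

theorem exists_mem_unitaryGroup_mul_eq {A S : Matrix n n 𝕜} (hS : S.IsHermitian)
    (hAS : Aᴴ * A = S * S) (hSu : IsUnit S) : ∃ U ∈ unitaryGroup n 𝕜, A = U * S := by
  have hSdet : IsUnit S.det := (isUnit_iff_isUnit_det S).1 hSu
  refine ⟨A * S⁻¹, ?_, by rw [Matrix.mul_assoc, nonsing_inv_mul S hSdet, Matrix.mul_one]⟩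
  rw [mem_unitaryGroup_iff', star_mul, (hS.inv).star_eq]
  calc S⁻¹ * Aᴴ * (A * S⁻¹) = S⁻¹ * (Aᴴ * A) * S⁻¹ := by simp only [Matrix.mul_assoc]
    _ = 1 := by
      rw [hAS, ← Matrix.mul_assoc, nonsing_inv_mul _ hSdet, Matrix.one_mul,
        mul_nonsing_inv _ hSdet]

end Matrix

/-- If an `n×n` real matrix `A` satisfies `‖AᵀA − I‖ = γ ∈ (0,1)` in the
operator norm, then there is an orthogonal matrix `B` with `‖AB − I‖ ≤ γ`. -/
theorem almost_unitary_matrix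
    {n : ℕ} (A : Matrix (Fin n) (Fin n) ℝ) (γ : ℝ) (hγ : γ ∈ Set.Ioo (0:ℝ) 1)
    (hA : opNorm (Aᵀ * A - 1) = γ) :
    ∃ B : Matrix (Fin n) (Fin n) ℝ, B ∈ Matrix.orthogonalGroup (Fin n) ℝ ∧
      opNorm (A * B - 1) ≤ γ := by
  have hAt : Aᴴ = Aᵀ := conjTranspose_eq_transpose_of_trivial A
  obtain ⟨S, hSh, hSS, hS1⟩ :=
    (posSemidef_conjTranspose_mul_self A).exists_isHermitian_mul_self_eq_norm_sub_one_le
  rw [hAt, ← opNorm_eq_l2_opNorm (Aᵀ * A - 1), hA] at hS1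
  obtain ⟨U, hU, rfl⟩ := exists_mem_unitaryGroup_mul_eq hSh hSS.symm
    (isUnit_of_norm_sub_one_lt_one (hS1.trans_lt hγ.2))
  exact ⟨star U, Unitary.star_mem hU, by
    rw [opNorm_eq_l2_opNorm, l2_opNorm_unitary_conj_sub_one hU]; exact hS1⟩
end
end

section
/- Let (v_p) be a family of vectors in a Hilbert space H satisfying |⟨v_p, v_q⟩ − δ_{pq}| ≤ ε for all p, q in a finite index set of size κ, with ε·κ < 1. Then the vectors v_p are linearly independent. -/
/-!
The Gram matrix of an almost orthonormal family is entrywise `ε`-close to the identity; since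
`ε κ < 1`, each diagonal entry (at least `1 - ε`) strictly dominates the off-diagonal part of its
row (at most `(κ - 1) ε`). By the Levy–Desplanques theorem the Gram determinant is nonzero, which
is equivalent to linear independence.
-/

namespace Matrix

theorem det_ne_zero_of_norm_sub_one_le {K n : Type*} [NormedField K] [Fintype n] [DecidableEq n]
    {A : Matrix n n K} {ε : ℝ} (hA : ∀ i j, ‖A i j - (1 : Matrix n n K) i j‖ ≤ ε)
    (hε : ε * Fintype.card n < 1) : A.det ≠ 0 := by
  refine det_ne_zero_of_sum_row_lt_diag fun k => ?_
  have hoff : ∑ j ∈ Finset.univ.erase k, ‖A k j‖ ≤ (Fintype.card n - 1) * ε := by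
    calc ∑ j ∈ Finset.univ.erase k, ‖A k j‖ ≤ ∑ _j ∈ Finset.univ.erase k, ε :=
          Finset.sum_le_sum fun j hj => by
            simpa [one_apply_ne' (Finset.ne_of_mem_erase hj)] using hA k j
      _ = (Fintype.card n - 1) * ε := by
          rw [Finset.sum_const, Finset.card_erase_of_mem (Finset.mem_univ k), nsmul_eq_mul,
            Finset.card_univ, Nat.cast_pred (Fintype.card_pos_iff.mpr ⟨k⟩)]
  have hdiag : 1 - ε ≤ ‖A k k‖ := by
    have h := hA k k
    rw [one_apply_eq, norm_sub_rev] at h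
    linarith [norm_sub_norm_le (1 : K) (A k k), norm_one (α := K)]
  linarith

end Matrix

theorem almost_orthonormal_linearIndependent_general
    {H : Type*} [NormedAddCommGroup H] [InnerProductSpace ℝ H]
    {κ : ℕ} (v : Fin κ → H) (ε : ℝ) (hεκ : ε * κ < 1)
    (halmost : ∀ p q : Fin κ,
      |inner ℝ (v p) (v q) - (if p = q then (1:ℝ) else 0)| ≤ ε) :
    LinearIndependent ℝ v := by
  rw [← Matrix.det_gram_ne_zero_iff_linearIndependent]
  refine Matrix.det_ne_zero_of_norm_sub_one_le (fun p q => ?_) (by simpa using hεκ)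
  simpa [Matrix.gram, Matrix.one_apply] using halmost p q

/-- Almost orthonormal vectors in a real inner product space are linearly
independent: if `|⟨v_p, v_q⟩ − δ_{pq}| ≤ ε` for `p, q = 1,…,κ` and `ε·κ < 1`, then the `v_p`
are linearly independent. -/
theorem almost_orthonormal_linearIndependent
    {H : Type*} [NormedAddCommGroup H] [InnerProductSpace ℝ H]
    {κ : ℕ} (v : Fin κ → H) (ε : ℝ) (hε : 0 ≤ ε) (hεκ : ε * κ < 1)
    (halmost : ∀ p q : Fin κ,
      |inner ℝ (v p) (v q) - (if p = q then (1:ℝ) else 0)| ≤ ε) :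
    LinearIndependent ℝ v :=
  almost_orthonormal_linearIndependent_general v ε hεκ halmost
end
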